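/- Let A be an invertible automaton over X = {0,1} whose set of states S is partitioned into two nonempty parts P and Q such that: (i) one of the parts consists exactly of the active states and the other exactly of the inactive states; (ii) for each state s ∈ P, both τ(s,0) and τ(s,1) lie in the same part (both in P or both in Q); (iii) for each state s ∈ Q, exactly one of τ(s,0), τ(s,1) lies in P and the other lies in Q. Then every element of G(A) that can be written as a product g₁⋯g_k, where each g_i is a state of A or the inverse of a state, such that the number of factors g_i coming from active states (or their inverses) is odd and the number of factors coming from inactive states (or their inverses) is odd, has infinite order. In particular, G(A) is not a torsion group. -/

import Mathlib

/-!
A tree automorphism `g` of the binary tree acts transitively on every level (and so has infinite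
order) as soon as, for every `n`, an odd number of its sections at the `2 ^ n` words of length `n`
are active: by induction, `g ^ 2 ^ n` fixes a word `v` of length `n`, and its section at `v`, the
product of the sections of `g` along the orbit of `v`, is active, so it swaps `v0` and `v1`.

Modulo 2 these level counts add up along products and do not change under inversion. For a
state `s` of the automaton the count is the activity of `s` on level `0`, and on every level
`n ≥ 1` it is `q s`, the indicator of `Q = Pᶜ`: by (ii) and (iii), `q (s0) + q (s1) = q s`, and
by (i) the activity differs from `q` by a constant, so the activities of `s0` and `s1` also add up
to `q s`. For a product with odd numbers of active and inactive factors, all level counts are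
therefore odd, `Q` being one of the two classes.
-/

/-- An invertible automaton over the two-letter alphabet `X = Bool` with set of states `S`:
`out s` is the output permutation `π(s,·) : X ≃ X` of the state `s`, and `tr s x` is the
state `τ(s,x)` reached from `s` after reading the letter `x`. -/
structure BinAutomaton (S : Type*) where
  out : S → Equiv.Perm Bool
  tr : S → Bool → S

namespace BinAutomaton

variable {S : Type*}

/-- The action of the state `s` of the automaton `A` on finite binary words,
given by `s(xw) = π(s,x) · (τ(s,x))(w)`. -/
def act (A : BinAutomaton S) : S → List Bool → List Bool
  | _, [] => []
  | s, x :: w => A.out s x :: A.act (A.tr s x) w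

@[simp] theorem act_nil (A : BinAutomaton S) (s : S) : A.act s [] = [] := rfl

@[simp] theorem act_cons (A : BinAutomaton S) (s : S) (x : Bool) (w : List Bool) :
    A.act s (x :: w) = A.out s x :: A.act (A.tr s x) w := rfl

/-- The inverse automaton of `A`. -/
def invAut (A : BinAutomaton S) : BinAutomaton S where
  out s := (A.out s).symm
  tr s x := A.tr s ((A.out s).symm x)

@[simp] theorem invAut_out (A : BinAutomaton S) (s : S) :
    A.invAut.out s = (A.out s).symm := rfl

@[simp] theorem invAut_tr (A : BinAutomaton S) (s : S) (x : Bool) :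
    A.invAut.tr s x = A.tr s ((A.out s).symm x) := rfl

theorem invAut_act_act (A : BinAutomaton S) (w : List Bool) :
    ∀ s : S, A.invAut.act s (A.act s w) = w := by
  induction w with
  | nil => exact fun s => rfl
  | cons x w ih =>
    intro s
    simp only [act_cons, invAut_out, invAut_tr, Equiv.symm_apply_apply]
    rw [ih]

theorem act_invAut_act (A : BinAutomaton S) (w : List Bool) :
    ∀ s : S, A.act s (A.invAut.act s w) = w := by
  induction w with
  | nil => exact fun s => rfl
  | cons x w ih =>
    intro s
    simp only [act_cons, invAut_out, invAut_tr, Equiv.apply_symm_apply]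
    rw [ih]

/-- The tree automorphism of `X* = List Bool` defined by the state `s` of the automaton `A`. -/
def toPerm (A : BinAutomaton S) (s : S) : Equiv.Perm (List Bool) where
  toFun := A.act s
  invFun := A.invAut.act s
  left_inv w := A.invAut_act_act w s
  right_inv w := A.act_invAut_act w s

/-- The automaton group `G(A)`: the subgroup of the group of permutations of
`X* = List Bool` generated by the tree automorphisms defined by the states of `A`. -/
def autGroup (A : BinAutomaton S) : Subgroup (Equiv.Perm (List Bool)) :=
  Subgroup.closure (Set.range A.toPerm)

end BinAutomaton

open Equiv Finset MulAction

def toggle (a : ZMod 2) (x : Bool) : Bool := if a = 0 then x else !x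

theorem toggle_add (a b : ZMod 2) (x : Bool) : toggle (a + b) x = toggle a (toggle b x) := by
  fin_cases a <;> fin_cases b <;> cases x <;> rfl

theorem toggle_toggle (a : ZMod 2) (x : Bool) : toggle a (toggle a x) = x := by
  fin_cases a <;> cases x <;> rfl

theorem toggle_one (x : Bool) : toggle 1 x = !x := rfl

/-- `φ v` is the activity of the section of `g` at `v`. For a length-preserving `g`, the second
field says that `g` is a tree automorphism. -/
structure HasSectionActivity (g : Perm (List Bool)) (φ : List Bool → ZMod 2) : Prop where
  length_apply : ∀ w, (g w).length = w.length
  apply_append_singleton : ∀ v x, g (v ++ [x]) = g v ++ [toggle (φ v) x]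

def levelSum (φ : List Bool → ZMod 2) (n : ℕ) : ZMod 2 := ∑ v : List.Vector Bool n, φ v.1

def List.Vector.consEquiv (α : Type*) (n : ℕ) :
    α × List.Vector α n ≃ List.Vector α (n + 1) where
  toFun p := p.1 ::ᵥ p.2
  invFun v := (v.head, v.tail)
  left_inv p := by simp
  right_inv v := v.cons_head_tail

theorem levelSum_zero (φ : List Bool → ZMod 2) : levelSum φ 0 = φ [] :=
  Fintype.sum_subsingleton _ List.Vector.nil

theorem levelSum_succ (φ : List Bool → ZMod 2) (n : ℕ) :
    levelSum φ (n + 1) =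
      levelSum (fun v => φ (false :: v)) n + levelSum (fun v => φ (true :: v)) n := by
  rw [levelSum, ← (List.Vector.consEquiv Bool n).sum_comp, Fintype.sum_prod_type,
    Fintype.sum_bool, add_comm]
  rfl

theorem levelSum_comp_perm {g : Perm (List Bool)} (hg : ∀ w, (g w).length = w.length)
    (φ : List Bool → ZMod 2) (n : ℕ) : levelSum (fun v => φ (g v)) n = levelSum φ n := by
  let e : List.Vector Bool n ≃ List.Vector Bool n :=
    g.subtypeEquiv (p := (·.length = n)) (q := (·.length = n)) fun w => by rw [hg]
  exact e.sum_comp fun v : List.Vector Bool n => φ v.1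

theorem levelSum_add (φ ψ : List Bool → ZMod 2) (n : ℕ) :
    levelSum (fun v => φ v + ψ v) n = levelSum φ n + levelSum ψ n :=
  sum_add_distrib

namespace HasSectionActivity

variable {g h : Perm (List Bool)} {φ ψ : List Bool → ZMod 2}

theorem one : HasSectionActivity 1 0 :=
  ⟨fun _ => rfl, fun v x => by simp [toggle]⟩

theorem mul (hg : HasSectionActivity g φ) (hh : HasSectionActivity h ψ) :
    HasSectionActivity (g * h) (fun v => φ (h v) + ψ v) where
  length_apply w := by rw [Perm.mul_apply, hg.length_apply, hh.length_apply]
  apply_append_singleton v x := by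
    rw [Perm.mul_apply, hh.apply_append_singleton, hg.apply_append_singleton, toggle_add]
    rfl

theorem inv (hg : HasSectionActivity g φ) :
    HasSectionActivity g⁻¹ (fun v => φ (g⁻¹ v)) where
  length_apply w := by rw [← hg.length_apply, Perm.coe_inv, Equiv.apply_symm_apply]
  apply_append_singleton v x := by
    rw [Perm.inv_eq_iff_eq, hg.apply_append_singleton, Perm.coe_inv, Equiv.apply_symm_apply,
      toggle_toggle]

theorem list_prod {ι : Type*} (l : List ι) (f : ι → Perm (List Bool))
    (c : ι → ℕ → ZMod 2)
    (hl : ∀ i ∈ l, ∃ φ, HasSectionActivity (f i) φ ∧ ∀ n, levelSum φ n = c i n) :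
    ∃ φ, HasSectionActivity (l.map f).prod φ ∧
      ∀ n, levelSum φ n = (l.map (c · n)).sum := by
  induction l with
  | nil => exact ⟨0, .one, fun n => by simp [levelSum]⟩
  | cons i l ih =>
    obtain ⟨φ, hφ, hφc⟩ := hl i List.mem_cons_self
    obtain ⟨ψ, hψ, hψc⟩ := ih fun j hj => hl j (List.mem_cons_of_mem i hj)
    refine ⟨fun v => φ ((l.map f).prod v) + ψ v, ?_, fun n => ?_⟩
    · rw [List.map_cons, List.prod_cons]
      exact hφ.mul hψ
    · rw [levelSum_add, levelSum_comp_perm hψ.length_apply, hφc, hψc, List.map_cons,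
        List.sum_cons]

theorem length_pow_apply (hg : HasSectionActivity g φ) (j : ℕ) (w : List Bool) :
    ((g ^ j) w).length = w.length := by
  induction j with
  | zero => rfl
  | succ j ih => rw [pow_succ', Perm.mul_apply, hg.length_apply, ih]

theorem pow_apply_append_singleton (hg : HasSectionActivity g φ) (j : ℕ) (v : List Bool)
    (x : Bool) :
    (g ^ j) (v ++ [x]) = (g ^ j) v ++ [toggle (∑ i ∈ range j, φ ((g ^ i) v)) x] := by
  induction j with
  | zero => simp [toggle]
  | succ j ih =>
    rw [pow_succ', Perm.mul_apply, ih, hg.apply_append_singleton, sum_range_succ, add_comm,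
      toggle_add, Perm.mul_apply]

/-- An orbit of length `2 ^ n` on the words of length `n` passes through every one of them. -/
theorem sum_range_period (hg : HasSectionActivity g φ) {v : List Bool}
    (hv : period g v = 2 ^ v.length) :
    ∑ i ∈ range (period g v), φ ((g ^ i) v) = levelSum φ v.length := by
  set orbit : Fin (period g v) → List.Vector Bool v.length :=
    fun i => ⟨(g ^ (i : ℕ)) v, hg.length_pow_apply i v⟩
  have horbit : Function.Bijective orbit := by
    rw [Fintype.bijective_iff_injective_and_card]
    refine ⟨fun i j hij => Fin.ext ?_, by simp [hv]⟩
    refine Function.iterate_injOn_Iio_minimalPeriod i.2 j.2 ?_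
    simpa [orbit, Perm.iterate_eq_pow, Perm.smul_def] using congrArg Subtype.val hij
  rw [← Fin.sum_univ_eq_sum_range, levelSum, ← horbit.sum_comp]

theorem period_eq_two_pow (hg : HasSectionActivity g φ) (hφ : ∀ n, levelSum φ n = 1)
    (v : List Bool) : period g v = 2 ^ v.length := by
  induction v using List.reverseRecOn with
  | nil => exact period_eq_one_iff.mpr (List.eq_nil_of_length_eq_zero (hg.length_apply []))
  | append_singleton v x ih =>
    have hfix : (g ^ 2 ^ v.length) v = v := by rw [← ih]; exact pow_period_smul g v
    have hflip : ∀ y, (g ^ 2 ^ v.length) (v ++ [y]) = v ++ [!y] := fun y => by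
      rw [hg.pow_apply_append_singleton, hfix, ← ih, hg.sum_range_period ih, hφ, toggle_one]
    set p := period g (v ++ [x])
    have hp : (g ^ p) (v ++ [x]) = v ++ [x] := pow_period_smul g (v ++ [x])
    have hp_dvd : p ∣ 2 ^ (v.length + 1) := by
      rw [← pow_smul_eq_iff_period_dvd, pow_succ, mul_two, pow_add, Perm.smul_def,
        Perm.mul_apply, hflip, hflip, Bool.not_not]
    have hdvd_p : 2 ^ v.length ∣ p := by
      rw [← ih, ← pow_smul_eq_iff_period_dvd, Perm.smul_def]
      rw [hg.pow_apply_append_singleton] at hp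
      exact (List.append_inj' hp rfl).1
    have hp_ne : p ≠ 2 ^ v.length := fun h => by
      rw [h, hflip] at hp
      simp at hp
    obtain ⟨k, hk, hpk⟩ := (Nat.dvd_prime_pow Nat.prime_two).mp hp_dvd
    rw [hpk] at hdvd_p hp_ne ⊢
    have hnk := (Nat.pow_dvd_pow_iff_le_right (by norm_num)).mp hdvd_p
    rw [List.length_append, List.length_singleton]
    congr 1
    by_contra
    exact hp_ne (by congr 1; omega)

theorem not_isOfFinOrder (hg : HasSectionActivity g φ) (hφ : ∀ n, levelSum φ n = 1) :
    ¬ IsOfFinOrder g := fun hfin => by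
  have hdvd := period_dvd_orderOf g (List.replicate (orderOf g) false)
  rw [hg.period_eq_two_pow hφ, List.length_replicate] at hdvd
  exact Nat.lt_two_pow_self.not_ge (Nat.le_of_dvd hfin.orderOf_pos hdvd)

end HasSectionActivity

theorem List.sum_map_ite_eq_countP {α : Type*} (l : List α) (f : α → Bool) :
    (l.map fun a => if f a then (1 : ZMod 2) else 0).sum = l.countP f := by
  induction l with
  | nil => simp
  | cons a l ih => by_cases h : f a <;> simp [h, ih, add_comm]

namespace BinAutomaton

variable {S : Type*} (A : BinAutomaton S)

def activity (s : S) : ZMod 2 := if A.out s false then 1 else 0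

theorem out_apply_eq_toggle (s : S) (x : Bool) : A.out s x = toggle (A.activity s) x := by
  have hne : A.out s false ≠ A.out s true := (A.out s).injective.ne Bool.false_ne_true
  cases x <;> cases h : A.out s false <;> simp_all [activity, toggle]

theorem length_act (s : S) (w : List Bool) : (A.act s w).length = w.length := by
  induction w generalizing s with
  | nil => rfl
  | cons x w ih => simp [ih]

theorem act_append_singleton (s : S) (v : List Bool) (x : Bool) :
    A.act s (v ++ [x]) = A.act s v ++ [A.out (v.foldl A.tr s) x] := by
  induction v generalizing s with
  | nil => rfl
  | cons y v ih => simp [ih]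

theorem hasSectionActivity_toPerm (s : S) :
    HasSectionActivity (A.toPerm s) fun v => A.activity (v.foldl A.tr s) where
  length_apply := A.length_act s
  apply_append_singleton v x := by
    rw [← out_apply_eq_toggle]
    exact A.act_append_singleton s v x

def levelActivity (n : ℕ) (s : S) : ZMod 2 := levelSum (fun v => A.activity (v.foldl A.tr s)) n

theorem levelActivity_zero (s : S) : A.levelActivity 0 s = A.activity s :=
  levelSum_zero _

theorem levelActivity_succ (n : ℕ) (s : S) :
    A.levelActivity (n + 1) s =
      A.levelActivity n (A.tr s false) + A.levelActivity n (A.tr s true) :=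
  levelSum_succ _ n

theorem levelActivity_succ_eq (q : S → ZMod 2)
    (hq : ∀ s, q (A.tr s false) + q (A.tr s true) = q s)
    (hact : ∀ s, A.activity (A.tr s false) + A.activity (A.tr s true) = q s) (n : ℕ) (s : S) :
    A.levelActivity (n + 1) s = q s := by
  induction n generalizing s with
  | zero => simp only [levelActivity_succ, levelActivity_zero, hact]
  | succ n ih => rw [levelActivity_succ, ih, ih, hq]

theorem exists_hasSectionActivity_toPerm_or_inv (s : S) (b : Bool) :
    ∃ φ, HasSectionActivity (if b then A.toPerm s else (A.toPerm s)⁻¹) φ ∧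
      ∀ n, levelSum φ n = A.levelActivity n s := by
  have hs := A.hasSectionActivity_toPerm s
  cases b
  · exact ⟨_, hs.inv,
      levelSum_comp_perm hs.inv.length_apply fun v => A.activity (v.foldl A.tr s)⟩
  · exact ⟨_, hs, fun n => rfl⟩

theorem sum_levelActivity_eq_one {c : ZMod 2}
    (hc : ∀ n s, A.levelActivity (n + 1) s = A.activity s + c) (l : List (S × Bool))
    (hactive : Odd (l.countP fun p => A.out p.1 false))
    (hinactive : Odd (l.countP fun p => !(A.out p.1 false))) (n : ℕ) :
    (l.map fun p => A.levelActivity n p.1).sum = 1 := by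
  have hactivity : (l.map fun p => A.activity p.1).sum = 1 := by
    rw [← ZMod.natCast_eq_one_iff_odd.mpr hactive, ← List.sum_map_ite_eq_countP]
    rfl
  have hlength : (l.length : ZMod 2) = 0 := by
    rw [List.length_eq_countP_add_countP (fun p => A.out p.1 false), Nat.cast_add,
      ZMod.natCast_eq_one_iff_odd.mpr hactive]
    simp [ZMod.natCast_eq_one_iff_odd.mpr hinactive, CharTwo.add_self_eq_zero]
  cases n with
  | zero => simpa only [levelActivity_zero] using hactivity
  | succ n => simp [hc, List.sum_map_add, hactivity, hlength]

theorem not_isOfFinOrder_prod {c : ZMod 2}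
    (hc : ∀ n s, A.levelActivity (n + 1) s = A.activity s + c) (l : List (S × Bool))
    (hactive : Odd (l.countP fun p => A.out p.1 false))
    (hinactive : Odd (l.countP fun p => !(A.out p.1 false))) :
    ¬ IsOfFinOrder
      ((l.map fun p => if p.2 then A.toPerm p.1 else (A.toPerm p.1)⁻¹).prod) := by
  obtain ⟨φ, hφ, hsum⟩ := HasSectionActivity.list_prod l _ (fun p n => A.levelActivity n p.1)
    fun p _ => A.exists_hasSectionActivity_toPerm_or_inv p.1 p.2
  refine hφ.not_isOfFinOrder fun n => ?_
  rw [hsum, A.sum_levelActivity_eq_one hc l hactive hinactive]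

section Partition

variable {P : Set S}

theorem indicator_compl_tr_add (hP : ∀ s ∈ P, (A.tr s false ∈ P ↔ A.tr s true ∈ P))
    (hQ : ∀ s ∈ Pᶜ, (A.tr s false ∈ P ↔ A.tr s true ∉ P)) (s : S) :
    Pᶜ.indicator 1 (A.tr s false) + Pᶜ.indicator 1 (A.tr s true) =
      Pᶜ.indicator (1 : S → ZMod 2) s := by
  by_cases hs : s ∈ P <;> by_cases h0 : A.tr s false ∈ P <;> by_cases h1 : A.tr s true ∈ P <;>
    simp_all [CharTwo.add_self_eq_zero]

theorem exists_activity_eq_indicator_add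
    (hparts : (∀ s, s ∈ P ↔ A.out s false = true) ∨
      (∀ s, s ∈ Pᶜ ↔ A.out s false = true)) :
    ∃ c : ZMod 2, ∀ s, A.activity s = Pᶜ.indicator 1 s + c := by
  rcases hparts with h | h
  · refine ⟨1, fun s => ?_⟩
    by_cases hs : s ∈ P <;> simp [activity, hs, ← h, CharTwo.add_self_eq_zero]
  · refine ⟨0, fun s => ?_⟩
    by_cases hs : s ∈ P <;> simp [activity, hs, ← h]

theorem exists_levelActivity_succ_eq_activity_add
    (hparts : (∀ s, s ∈ P ↔ A.out s false = true) ∨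
      (∀ s, s ∈ Pᶜ ↔ A.out s false = true))
    (hP : ∀ s ∈ P, (A.tr s false ∈ P ↔ A.tr s true ∈ P))
    (hQ : ∀ s ∈ Pᶜ, (A.tr s false ∈ P ↔ A.tr s true ∉ P)) :
    ∃ c : ZMod 2, ∀ n s, A.levelActivity (n + 1) s = A.activity s + c := by
  obtain ⟨c, hc⟩ := A.exists_activity_eq_indicator_add hparts
  refine ⟨c, fun n s => ?_⟩
  have hact (s : S) :
      A.activity (A.tr s false) + A.activity (A.tr s true) = Pᶜ.indicator 1 s := by
    rw [hc, hc, add_add_add_comm, CharTwo.add_self_eq_zero, add_zero,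
      A.indicator_compl_tr_add hP hQ]
  rw [A.levelActivity_succ_eq _ (A.indicator_compl_tr_add hP hQ) hact, hc, add_assoc,
    CharTwo.add_self_eq_zero, add_zero]

end Partition

end BinAutomaton

open BinAutomaton

theorem odd_active_odd_inactive_infinite_order {S : Type}
    (A : BinAutomaton S) (P : Set S) (hPne : P.Nonempty) (hQne : Pᶜ.Nonempty)
    (hparts : (∀ s, s ∈ P ↔ A.out s false = true) ∨ (∀ s, s ∈ Pᶜ ↔ A.out s false = true))
    (hP : ∀ s ∈ P, (A.tr s false ∈ P ↔ A.tr s true ∈ P))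
    (hQ : ∀ s ∈ Pᶜ, (A.tr s false ∈ P ↔ A.tr s true ∉ P)) :
    (∀ l : List (S × Bool),
      Odd (l.countP fun p => A.out p.1 false) →
      Odd (l.countP fun p => !(A.out p.1 false)) →
      ¬ IsOfFinOrder
        ((l.map fun p => if p.2 then A.toPerm p.1 else (A.toPerm p.1)⁻¹).prod)) ∧
    ∃ g ∈ A.autGroup, ¬ IsOfFinOrder g := by
  obtain ⟨c, hc⟩ := A.exists_levelActivity_succ_eq_activity_add hparts hP hQ
  refine ⟨A.not_isOfFinOrder_prod hc, ?_⟩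
  obtain ⟨s, hs⟩ := hPne
  obtain ⟨t, ht⟩ := hQne
  have hst : A.out s false ≠ A.out t false := by
    rcases hparts with h | h
    · simpa [(h s).mp hs, ← h t] using ht
    · simpa [(h t).mp ht, ← h s] using hs
  refine ⟨A.toPerm s * A.toPerm t,
    mul_mem (Subgroup.subset_closure ⟨s, rfl⟩) (Subgroup.subset_closure ⟨t, rfl⟩), ?_⟩
  simpa using A.not_isOfFinOrder_prod hc [(s, true), (t, true)]
    (by cases h : A.out s false <;> simp_all) (by cases h : A.out s false <;> simp_all)
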